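/- Let a, b, u_1, u_2, v_1, v_2 ∈ Θ be homogeneous polynomials of degree N such that the four sums u_i + v_j (1 ≤ i, j ≤ 2) are pairwise distinct. Then (a · (1 − u_1)^{-1}(1 − u_2)^{-1}) ⊙ (b · (1 − v_1)^{-1}(1 − v_2)^{-1}) = a · b · (2 − u_1 − u_2 − v_1 − v_2) · ∏_{i,j=1}^2 (1 − u_i − v_j)^{-1}. -/

import Mathlib

variable {σ : Type*}

/-- Total degree of a monomial. -/
def monDeg (d : σ →₀ ℕ) : ℕ := d.sum fun _ n => n

/-- `Θ`: series whose coefficients vanish in degrees not divisible by `N`. -/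
def InTheta (N : ℕ) (f : MvPowerSeries σ ℚ) : Prop :=
  ∀ d : σ →₀ ℕ, ¬ (N ∣ monDeg d) → MvPowerSeries.coeff d f = 0

/-- `f^(k)`: homogeneous component of total degree `N * k`. -/
noncomputable def homComp (N : ℕ) (f : MvPowerSeries σ ℚ) (k : ℕ) : MvPowerSeries σ ℚ :=
  fun d => if monDeg d = N * k then MvPowerSeries.coeff d f else 0

/-- The operation `⊙`: `f ⊙ g = Σ_{k,ℓ} C(k+ℓ,k) f^(k) g^(ℓ)`, defined coefficientwise
(at a monomial of total degree `m`, only indices `k, ℓ ≤ m` can contribute, for `N ≥ 1`). -/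
noncomputable def odot (N : ℕ) (f g : MvPowerSeries σ ℚ) : MvPowerSeries σ ℚ :=
  fun d => ∑ k ∈ Finset.range (monDeg d + 1), ∑ l ∈ Finset.range (monDeg d + 1),
    ((k + l).choose k : ℚ) * MvPowerSeries.coeff d (homComp N f k * homComp N g l)

/-- The `E`-transform: `E f = Σ_k (q^k / k!) f^(k)`. -/
noncomputable def Etrans (N : ℕ) (f : MvPowerSeries σ ℚ) :
    PowerSeries (MvPowerSeries σ ℚ) :=
  PowerSeries.mk fun k => (k.factorial : ℚ)⁻¹ • homComp N f k

/-- `exp(q·u) = Σ_k (q^k / k!) u^k`. -/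
noncomputable def expQ (u : MvPowerSeries σ ℚ) : PowerSeries (MvPowerSeries σ ℚ) :=
  PowerSeries.mk fun k => (k.factorial : ℚ)⁻¹ • u ^ k

/-- A homogeneous polynomial of degree `N`: finitely many nonzero coefficients,
all in total degree exactly `N`. -/
def IsHomogDeg (N : ℕ) (a : MvPowerSeries σ ℚ) : Prop :=
  {d : σ →₀ ℕ | MvPowerSeries.coeff d a ≠ 0}.Finite ∧
    ∀ d : σ →₀ ℕ, MvPowerSeries.coeff d a ≠ 0 → monDeg d = N

/-- Iterated `⊙`-product of a nonempty list. -/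
noncomputable def odotList (N : ℕ) : List (MvPowerSeries σ ℚ) → MvPowerSeries σ ℚ
  | [] => 1
  | [f] => f
  | f :: g :: rest => odot N f (odotList N (g :: rest))

/-!
The homogenization `f ↦ Σₘ fₘ tᵐ` (`fₘ` the homogeneous component of degree `m`) is a ring
homomorphism `MvPowerSeries σ ℚ → (MvPowerSeries σ ℚ)⟦t⟧`, inverted on its image by setting
`t = 1`. For series built from homogeneous polynomials of degree `N` it is the expansion `q ↦ t^N`
of an explicit series in `q`: `a ↦ a q`, `(1 - u)⁻¹ ↦ Σ uᵏ qᵏ`. Since `f^(k)` is the coefficient of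
`t^(N k)`, the product `⊙` becomes the binomial convolution `Σ_{k+l=n} C(n,k) F_k G_l` of these
series in `q`, and the theorem reduces to a power series identity over any commutative ring.

To prove it, multiply by `(u₁ - u₂)(v₁ - v₂)`: partial fractions turn both factors into differences
of geometric series, and the binomial theorem gives
`binomConv (geomSeries u) (geomSeries v) = geomSeries (u + v)`. The factor is cancelled in the
domain `ℤ[a, b, u₁, u₂, v₁, v₂]`, whence the identity specializes to every commutative ring.
-/

open PowerSeries Finset

section GeomSeries

variable {A B : Type*} [CommRing A] [CommRing B]

noncomputable def geomSeries (u : A) : A⟦X⟧ := mk (u ^ ·)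

@[simp]
lemma coeff_geomSeries (u : A) (n : ℕ) : coeff n (geomSeries u) = u ^ n := coeff_mk _ _

lemma map_geomSeries (φ : A →+* B) (u : A) : map φ (geomSeries u) = geomSeries (φ u) := by
  ext; simp

lemma one_sub_C_mul_X_mul_geomSeries (u : A) : (1 - C u * X) * geomSeries u = 1 := by
  simpa [rescale_mk, rescale_X, mul_comm, geomSeries] using
    congrArg (rescale u) (mk_one_mul_one_sub_eq_one (S := A))

lemma C_sub_mul_X_mul_geomSeries (u v : A) :
    C (u - v) * X * (geomSeries u * geomSeries v) = geomSeries u - geomSeries v := by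
  rw [map_sub]
  linear_combination geomSeries u * one_sub_C_mul_X_mul_geomSeries v -
    geomSeries v * one_sub_C_mul_X_mul_geomSeries u

lemma two_sub_C_add_mul_X_mul_geomSeries (u v : A) :
    (2 - C (u + v) * X) * (geomSeries u * geomSeries v) = geomSeries u + geomSeries v := by
  rw [map_add]
  linear_combination geomSeries v * one_sub_C_mul_X_mul_geomSeries u +
    geomSeries u * one_sub_C_mul_X_mul_geomSeries v

lemma C_mul_X_sq_mul_two_sub_mul_geomSeries (u₁ u₂ v₁ v₂ : A) :
    C ((u₁ - u₂) * (v₁ - v₂)) * X ^ 2 * (2 - C (u₁ + u₂ + v₁ + v₂) * X) *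
        (geomSeries (u₁ + v₁) * geomSeries (u₁ + v₂) * geomSeries (u₂ + v₁) *
          geomSeries (u₂ + v₂)) =
      geomSeries (u₁ + v₁) - geomSeries (u₁ + v₂) - geomSeries (u₂ + v₁) +
        geomSeries (u₂ + v₂) := by
  have e₁ := C_sub_mul_X_mul_geomSeries (u₁ + v₁) (u₁ + v₂)
  have e₂ := C_sub_mul_X_mul_geomSeries (u₂ + v₁) (u₂ + v₂)
  have e₃ := C_sub_mul_X_mul_geomSeries (u₁ + v₁) (u₂ + v₁)
  have e₄ := C_sub_mul_X_mul_geomSeries (u₁ + v₂) (u₂ + v₂)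
  have e₅ := two_sub_C_add_mul_X_mul_geomSeries (u₁ + v₁) (u₂ + v₂)
  simp only [map_sub, map_add, map_mul] at *
  linear_combination
    (C u₁ - C u₂) * (C v₁ - C v₂) * X ^ 2 * geomSeries (u₁ + v₂) * geomSeries (u₂ + v₁) * e₅ +
    (C v₁ - C v₂) * X * geomSeries (u₁ + v₂) * e₃ +
    (C v₁ - C v₂) * X * geomSeries (u₂ + v₁) * e₄ + e₁ - e₂

end GeomSeries

section BinomConv

variable {A B : Type*} [CommRing A] [CommRing B]

noncomputable def binomConv : A⟦X⟧ →ₗ[A] A⟦X⟧ →ₗ[A] A⟦X⟧ :=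
  LinearMap.mk₂ A
    (fun F G => mk fun n => ∑ p ∈ antidiagonal n, n.choose p.1 • (coeff p.1 F * coeff p.2 G))
    (fun _ _ _ => by ext; simp [add_mul, sum_add_distrib])
    (fun _ _ _ => by ext; simp [mul_sum, mul_assoc, mul_left_comm])
    (fun _ _ _ => by ext; simp [mul_add, sum_add_distrib])
    (fun _ _ _ => by ext; simp [mul_sum, mul_left_comm])

lemma coeff_binomConv (F G : A⟦X⟧) (n : ℕ) :
    coeff n (binomConv F G) =
      ∑ p ∈ antidiagonal n, n.choose p.1 • (coeff p.1 F * coeff p.2 G) := by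
  simp [binomConv]

lemma map_binomConv (φ : A →+* B) (F G : A⟦X⟧) :
    map φ (binomConv F G) = binomConv (map φ F) (map φ G) := by
  ext n; simp [coeff_binomConv]

lemma binomConv_geomSeries (u v : A) :
    binomConv (geomSeries u) (geomSeries v) = geomSeries (u + v) := by
  ext n; simp [coeff_binomConv, (Commute.all u v).add_pow']

lemma sub_smul_C_mul_X_mul_geomSeries (a u v : A) :
    (u - v) • (C a * X * (geomSeries u * geomSeries v)) = a • (geomSeries u - geomSeries v) := by
  rw [smul_eq_C_mul, smul_eq_C_mul, ← C_sub_mul_X_mul_geomSeries]; ring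

lemma binomConv_C_mul_X_mul_geomSeries_of_ne [IsDomain A] {u₁ u₂ v₁ v₂ : A}
    (h : (u₁ - u₂) * (v₁ - v₂) ≠ 0) (a b : A) :
    binomConv (C a * X * (geomSeries u₁ * geomSeries u₂))
        (C b * X * (geomSeries v₁ * geomSeries v₂)) =
      C a * X * (C b * X) * (2 - C (u₁ + u₂ + v₁ + v₂) * X) *
        (geomSeries (u₁ + v₁) * geomSeries (u₁ + v₂) * geomSeries (u₂ + v₁) *
          geomSeries (u₂ + v₂)) := by
  refine mul_left_cancel₀ ((map_ne_zero_iff _ C_injective).mpr h) ?_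
  rw [← smul_eq_C_mul]
  calc ((u₁ - u₂) * (v₁ - v₂)) • binomConv (C a * X * (geomSeries u₁ * geomSeries u₂))
          (C b * X * (geomSeries v₁ * geomSeries v₂))
      = binomConv ((u₁ - u₂) • (C a * X * (geomSeries u₁ * geomSeries u₂)))
          ((v₁ - v₂) • (C b * X * (geomSeries v₁ * geomSeries v₂))) := by
        rw [map_smul, map_smul, LinearMap.smul_apply, smul_smul, mul_comm]
    _ = (a * b) • (geomSeries (u₁ + v₁) - geomSeries (u₁ + v₂) - geomSeries (u₂ + v₁) +
          geomSeries (u₂ + v₂)) := by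
        simp only [sub_smul_C_mul_X_mul_geomSeries, map_smul, LinearMap.smul_apply, map_sub,
          LinearMap.sub_apply, binomConv_geomSeries]
        module
    _ = _ := by
        rw [← C_mul_X_sq_mul_two_sub_mul_geomSeries, smul_eq_C_mul]
        simp only [map_mul]
        ring

lemma binomConv_C_mul_X_mul_geomSeries (a b u₁ u₂ v₁ v₂ : A) :
    binomConv (C a * X * (geomSeries u₁ * geomSeries u₂))
        (C b * X * (geomSeries v₁ * geomSeries v₂)) =
      C a * X * (C b * X) * (2 - C (u₁ + u₂ + v₁ + v₂) * X) *
        (geomSeries (u₁ + v₁) * geomSeries (u₁ + v₂) * geomSeries (u₂ + v₁) *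
          geomSeries (u₂ + v₂)) := by
  open MvPolynomial in
  have hne : ((X 2 - X 3) * (X 4 - X 5) : MvPolynomial (Fin 6) ℤ) ≠ 0 :=
    mul_ne_zero (sub_ne_zero.mpr (X_injective.ne (by decide)))
      (sub_ne_zero.mpr (X_injective.ne (by decide)))
  simpa [map_binomConv, map_geomSeries, map_ofNat] using
    congrArg (PowerSeries.map (MvPolynomial.eval₂Hom (Int.castRingHom A) ![a, b, u₁, u₂, v₁, v₂]))
      (binomConv_C_mul_X_mul_geomSeries_of_ne hne (.X 0) (.X 1))

end BinomConv

section Homogenization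

open MvPowerSeries hiding C X coeff expand

variable {R : Type*} [CommRing R]

lemma MvPowerSeries.isHomogeneous_one : (1 : MvPowerSeries σ R).IsHomogeneous 0 := by
  intro d hd
  classical
  rw [MvPowerSeries.coeff_one] at hd
  simp_all

lemma MvPowerSeries.homogeneousComponent_of_isHomogeneous {f : MvPowerSeries σ R} {p : ℕ}
    (hf : f.IsHomogeneous p) (m : ℕ) : homogeneousComponent m f = if m = p then f else 0 := by
  split_ifs with h
  · exact h ▸ (isHomogeneous_iff_eq_homogeneousComponent.mp hf).symm
  · ext d
    rw [coeff_homogeneousComponent, map_zero]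
    split_ifs with hd
    · exact hf.coeff_eq_zero (hd ▸ h)
    · rfl

lemma MvPowerSeries.homogeneousComponent_mul (f g : MvPowerSeries σ R) (m : ℕ) :
    homogeneousComponent m (f * g) =
      ∑ p ∈ antidiagonal m, homogeneousComponent p.1 f * homogeneousComponent p.2 g := by
  classical
  ext d
  simp only [coeff_homogeneousComponent, MvPowerSeries.coeff_mul, map_sum, ite_zero_mul_ite_zero]
  rw [sum_comm, ite_sum_zero]
  refine sum_congr rfl fun q hq => ?_
  rw [HasAntidiagonal.mem_antidiagonal] at hq
  have key : ∀ p : ℕ × ℕ, (q.1.degree = p.1 ∧ q.2.degree = p.2) ↔ (q.1.degree, q.2.degree) = p :=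
    fun p => by simp [Prod.ext_iff]
  simp_rw [key, sum_ite_eq, HasAntidiagonal.mem_antidiagonal, ← map_add, hq]

noncomputable def homogenization : MvPowerSeries σ R →+* (MvPowerSeries σ R)⟦X⟧ where
  toFun f := mk fun m => homogeneousComponent m f
  map_one' := by
    ext m : 1
    simp [homogeneousComponent_of_isHomogeneous isHomogeneous_one, PowerSeries.coeff_one]
  map_mul' f g := by
    ext m : 1
    simp [homogeneousComponent_mul, PowerSeries.coeff_mul]
  map_zero' := by ext; simp
  map_add' f g := by ext; simp

lemma coeff_homogenization (f : MvPowerSeries σ R) (m : ℕ) :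
    coeff m (homogenization f) = homogeneousComponent m f := by
  simp [homogenization]

lemma homogenization_of_isHomogeneous {f : MvPowerSeries σ R} {p : ℕ} (hf : f.IsHomogeneous p) :
    homogenization f = C f * X ^ p := by
  ext m : 1
  rw [coeff_homogenization, homogeneousComponent_of_isHomogeneous hf, coeff_C_mul_X_pow]

lemma homogenization_eq_expand_C_mul_X {N : ℕ} (hN : N ≠ 0) {f : MvPowerSeries σ R}
    (hf : f.IsHomogeneous N) : homogenization f = expand N hN (C f * X) := by
  rw [homogenization_of_isHomogeneous hf, map_mul, PowerSeries.expand_C, PowerSeries.expand_X]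

lemma homogenization_inv_one_sub {k : Type*} [Field k] {N : ℕ} (hN : N ≠ 0)
    {u : MvPowerSeries σ k} (hu : u.IsHomogeneous N) :
    homogenization (1 - u)⁻¹ = expand N hN (geomSeries u) := by
  have hu₀ : constantCoeff u = 0 := by
    rw [← MvPowerSeries.coeff_zero_eq_constantCoeff_apply]
    exact hu.coeff_eq_zero (by simpa using hN.symm)
  refine left_inv_eq_right_inv (a := homogenization (1 - u)) ?_ ?_
  · rw [← map_mul, MvPowerSeries.inv_mul_cancel _ (by simp [hu₀]), map_one]
  · rw [map_sub, map_one, homogenization_eq_expand_C_mul_X hN hu, ← map_one (expand N hN),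
      ← map_sub, ← map_mul, one_sub_C_mul_X_mul_geomSeries, map_one]

lemma homogenization_mul_inv_one_sub_mul_inv_one_sub {k : Type*} [Field k] {N : ℕ} (hN : N ≠ 0)
    {a u v : MvPowerSeries σ k} (ha : a.IsHomogeneous N) (hu : u.IsHomogeneous N)
    (hv : v.IsHomogeneous N) :
    homogenization (a * ((1 - u)⁻¹ * (1 - v)⁻¹)) =
      expand N hN (C a * X * (geomSeries u * geomSeries v)) := by
  simp only [map_mul, homogenization_eq_expand_C_mul_X hN ha, homogenization_inv_one_sub hN hu,
    homogenization_inv_one_sub hN hv]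

noncomputable def dehomogenize (F : (MvPowerSeries σ R)⟦X⟧) : MvPowerSeries σ R :=
  fun d => MvPowerSeries.coeff d (coeff d.degree F)

lemma coeff_dehomogenize (F : (MvPowerSeries σ R)⟦X⟧) (d : σ →₀ ℕ) :
    MvPowerSeries.coeff d (dehomogenize F) = MvPowerSeries.coeff d (coeff d.degree F) :=
  rfl

lemma dehomogenize_homogenization (f : MvPowerSeries σ R) :
    dehomogenize (homogenization f) = f := by
  ext d
  simp [coeff_dehomogenize, coeff_homogenization, coeff_homogeneousComponent]

lemma monDeg_eq_degree (d : σ →₀ ℕ) : monDeg d = d.degree := rfl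

lemma IsHomogDeg.isHomogeneous {N : ℕ} {a : MvPowerSeries σ ℚ} (ha : IsHomogDeg N a) :
    a.IsHomogeneous N := fun hd => by
  have := ha.2 _ hd
  rwa [monDeg_eq_degree, Finsupp.degree_eq_weight_one] at this

lemma homComp_eq_homogeneousComponent (N : ℕ) (f : MvPowerSeries σ ℚ) (k : ℕ) :
    homComp N f k = homogeneousComponent (N * k) f := by
  ext d
  rw [coeff_homogeneousComponent]
  rfl

lemma mk_homComp_of_homogenization_eq {N : ℕ} (hN : N ≠ 0) {f : MvPowerSeries σ ℚ}
    {F : (MvPowerSeries σ ℚ)⟦X⟧} (h : homogenization f = expand N hN F) :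
    mk (homComp N f) = F := by
  ext k : 1
  rw [coeff_mk, homComp_eq_homogeneousComponent, ← coeff_homogenization, h, coeff_expand_mul]

lemma coeff_homComp_mul_homComp_eq_zero {N : ℕ} (f g : MvPowerSeries σ ℚ) {k l : ℕ} {d : σ →₀ ℕ}
    (hd : d.degree ≠ N * (k + l)) :
    MvPowerSeries.coeff d (homComp N f k * homComp N g l) = 0 := by
  rw [homComp_eq_homogeneousComponent, homComp_eq_homogeneousComponent]
  rw [mul_add] at hd
  exact IsHomogeneous.coeff_eq_zero (IsHomogeneous.mul (isHomogeneous_homogeneousComponent f _)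
    (isHomogeneous_homogeneousComponent g _)) hd

lemma odot_eq_dehomogenize {N : ℕ} (hN : N ≠ 0) (f g : MvPowerSeries σ ℚ) :
    odot N f g = dehomogenize (expand N hN (binomConv (mk (homComp N f)) (mk (homComp N g)))) := by
  have hN₀ := Nat.pos_of_ne_zero hN
  ext d
  rw [coeff_dehomogenize, coeff_expand]
  change ∑ k ∈ range (monDeg d + 1), ∑ l ∈ range (monDeg d + 1), _ = _
  rw [monDeg_eq_degree, ← sum_product']
  split_ifs with hdvd
  · obtain ⟨n, hn⟩ := hdvd
    rw [hn, Nat.mul_div_cancel_left n hN₀, coeff_binomConv, map_sum]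
    have hsub : antidiagonal n ⊆ range (N * n + 1) ×ˢ range (N * n + 1) := fun x hx => by
      have := Nat.le_mul_of_pos_left n hN₀
      rw [HasAntidiagonal.mem_antidiagonal] at hx
      simp only [mem_product, mem_range]
      omega
    rw [← sum_subset hsub fun x _ hx => ?_]
    · refine sum_congr rfl fun x hx => ?_
      rw [HasAntidiagonal.mem_antidiagonal.mp hx, coeff_mk, coeff_mk, map_nsmul, nsmul_eq_mul]
    · rw [coeff_homComp_mul_homComp_eq_zero f g, mul_zero]
      rwa [hn, Ne, Nat.mul_left_cancel_iff hN₀, eq_comm, ← HasAntidiagonal.mem_antidiagonal]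
  · refine (sum_eq_zero fun x _ => ?_).trans (map_zero _).symm
    rw [coeff_homComp_mul_homComp_eq_zero f g, mul_zero]
    exact fun h => hdvd ⟨_, h⟩

end Homogenization

theorem odot_example_P11_22_general {σ : Type*} (N : ℕ) (hN : 1 ≤ N)
    (a b u₁ u₂ v₁ v₂ : MvPowerSeries σ ℚ)
    (ha : IsHomogDeg N a) (hb : IsHomogDeg N b)
    (hu₁ : IsHomogDeg N u₁) (hu₂ : IsHomogDeg N u₂)
    (hv₁ : IsHomogDeg N v₁) (hv₂ : IsHomogDeg N v₂) :
    odot N (a * ((1 - u₁)⁻¹ * (1 - u₂)⁻¹)) (b * ((1 - v₁)⁻¹ * (1 - v₂)⁻¹)) =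
      a * b * (2 - u₁ - u₂ - v₁ - v₂) *
        ((1 - u₁ - v₁)⁻¹ * (1 - u₁ - v₂)⁻¹ * (1 - u₂ - v₁)⁻¹ * (1 - u₂ - v₂)⁻¹) := by
  have hN₀ : N ≠ 0 := Nat.one_le_iff_ne_zero.mp hN
  replace ha : a.IsHomogeneous N := ha.isHomogeneous
  replace hb : b.IsHomogeneous N := hb.isHomogeneous
  replace hu₁ : u₁.IsHomogeneous N := hu₁.isHomogeneous
  replace hu₂ : u₂.IsHomogeneous N := hu₂.isHomogeneous
  replace hv₁ : v₁.IsHomogeneous N := hv₁.isHomogeneous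
  replace hv₂ : v₂.IsHomogeneous N := hv₂.isHomogeneous
  have hs : (u₁ + u₂ + v₁ + v₂).IsHomogeneous N := MvPowerSeries.IsHomogeneous.add
    (MvPowerSeries.IsHomogeneous.add (MvPowerSeries.IsHomogeneous.add hu₁ hu₂) hv₁) hv₂
  have hrhs : homogenization (a * b * (2 - u₁ - u₂ - v₁ - v₂) *
      ((1 - u₁ - v₁)⁻¹ * (1 - u₁ - v₂)⁻¹ * (1 - u₂ - v₁)⁻¹ * (1 - u₂ - v₂)⁻¹)) =
      expand N hN₀ (C a * X * (C b * X) * (2 - C (u₁ + u₂ + v₁ + v₂) * X) *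
        (geomSeries (u₁ + v₁) * geomSeries (u₁ + v₂) * geomSeries (u₂ + v₁) *
          geomSeries (u₂ + v₂))) := by
    simp only [sub_sub, map_mul, map_sub, map_ofNat, homogenization_eq_expand_C_mul_X hN₀ ha,
      homogenization_eq_expand_C_mul_X hN₀ hb, homogenization_eq_expand_C_mul_X hN₀ hs,
      homogenization_inv_one_sub hN₀ (hu₁.add hv₁), homogenization_inv_one_sub hN₀ (hu₁.add hv₂),
      homogenization_inv_one_sub hN₀ (hu₂.add hv₁), homogenization_inv_one_sub hN₀ (hu₂.add hv₂)]
  rw [odot_eq_dehomogenize hN₀,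
    mk_homComp_of_homogenization_eq hN₀
      (homogenization_mul_inv_one_sub_mul_inv_one_sub hN₀ ha hu₁ hu₂),
    mk_homComp_of_homogenization_eq hN₀
      (homogenization_mul_inv_one_sub_mul_inv_one_sub hN₀ hb hv₁ hv₂),
    binomConv_C_mul_X_mul_geomSeries, ← hrhs, dehomogenize_homogenization]

/-- example `P^{1,1}_{2,2}`:
`(a (1-u₁)⁻¹(1-u₂)⁻¹) ⊙ (b (1-v₁)⁻¹(1-v₂)⁻¹)
  = a b (2 - u₁ - u₂ - v₁ - v₂) ∏_{i,j} (1-u_i-v_j)⁻¹`. -/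
theorem odot_example_P11_22 {σ : Type*} (N : ℕ) (hN : 1 ≤ N)
    (a b u₁ u₂ v₁ v₂ : MvPowerSeries σ ℚ)
    (ha : IsHomogDeg N a) (hb : IsHomogDeg N b)
    (hu₁ : IsHomogDeg N u₁) (hu₂ : IsHomogDeg N u₂)
    (hv₁ : IsHomogDeg N v₁) (hv₂ : IsHomogDeg N v₂)
    (hdist : [u₁ + v₁, u₁ + v₂, u₂ + v₁, u₂ + v₂].Pairwise (· ≠ ·)) :
    odot N (a * ((1 - u₁)⁻¹ * (1 - u₂)⁻¹)) (b * ((1 - v₁)⁻¹ * (1 - v₂)⁻¹)) =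
      a * b * (2 - u₁ - u₂ - v₁ - v₂) *
        ((1 - u₁ - v₁)⁻¹ * (1 - u₁ - v₂)⁻¹ * (1 - u₂ - v₁)⁻¹ * (1 - u₂ - v₂)⁻¹) :=
  odot_example_P11_22_general N hN a b u₁ u₂ v₁ v₂ ha hb hu₁ hu₂ hv₁ hv₂
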